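/- The minimum occurrence is extendable to a maximum nonoverlapping family: if a pattern p has at least one occurrence in sequence s, then the lexicographically minimal occurrence l* of p in s is contained in some maximum-cardinality family of pairwise nonoverlapping occurrences of p in s. -/

import Mathlib

/-- `IsOcc s p l` : `l` is an occurrence of pattern `p` in sequence `s`:
a strictly increasing list of indices into `s`, of the same length as `p`,
with coordinatewise containment of the pattern itemsets. -/
def IsOcc (s p : List (Finset ℕ)) (l : List ℕ) : Prop :=
  l.length = p.length ∧ l.Chain' (· < ·) ∧ (∀ x ∈ l, x < s.length) ∧
  ∀ k, k < p.length → p.getD k ∅ ⊆ s.getD (l.getD k 0) ∅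

/-- Two occurrences are nonoverlapping iff they differ at every coordinate. -/
def NonOverlap (l l' : List ℕ) : Prop :=
  ∀ k, k < l.length → l.getD k 0 ≠ l'.getD k 0

/-- `supp s p` : the maximum cardinality of a family of pairwise
nonoverlapping occurrences of `p` in `s`. -/
noncomputable def supp (s p : List (Finset ℕ)) : ℕ :=
  sSup {k | ∃ F : Finset (List ℕ), F.card = k ∧ (∀ l ∈ F, IsOcc s p l) ∧
    (F : Set (List ℕ)).Pairwise NonOverlap}

/-- Support of a pattern in a database: sum of supports over the sequences. -/
noncomputable def suppD (D : List (List (Finset ℕ))) (p : List (Finset ℕ)) : ℕ :=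
  (D.map (fun s => supp s p)).sum

/-!
Occurrences are closed under coordinatewise `min` and `max`: each coordinate of the result is
a coordinate of one of the two occurrences, and `min`/`max` of two strictly increasing
sequences is strictly increasing. Hence the lexicographically least occurrence `l*` is also
coordinatewise least. Take a maximum nonoverlapping family. If two of its members overlap `l*`,
replace them by their coordinatewise `min` and `max`: the family stays nonoverlapping and keeps
its size, and the `max` lies strictly above `l*` in every coordinate, so fewer members overlap
`l*`. Once at most one member overlaps `l*`, swapping it for `l*` gives the required family.
-/

namespace List

variable {α β γ : Type*}

theorem IsChain.zipWith {R : α → α → Prop} {S : β → β → Prop} {T : γ → γ → Prop}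
    {f : α → β → γ} (hf : ∀ a a' b b', R a a' → S b b' → T (f a b) (f a' b')) :
    ∀ {as : List α} {bs : List β}, IsChain R as → IsChain S bs → IsChain T (zipWith f as bs)
  | a :: a' :: as, b :: b' :: bs, ha, hb => by
    rw [isChain_cons_cons] at ha hb
    rw [zipWith_cons_cons, zipWith_cons_cons, isChain_cons_cons, ← zipWith_cons_cons]
    exact ⟨hf _ _ _ _ ha.1 hb.1, IsChain.zipWith hf ha.2 hb.2⟩
  | [], _, _, _ | [_], [], _, _ | [_], _ :: _, _, _ | _ :: _ :: _, [], _, _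
  | _ :: _ :: _, [_], _, _ => by simp

theorem getD_zipWith_of_length_eq {f : α → α → α} {d : α} (hf : f d d = d) {as bs : List α}
    (h : as.length = bs.length) (k : ℕ) :
    (zipWith f as bs).getD k d = f (as.getD k d) (bs.getD k d) := by
  simp only [getD_eq_getElem?_getD, getElem?_zipWith]
  rcases lt_or_ge k as.length with hk | hk
  · simp [getElem?_eq_getElem hk, getElem?_eq_getElem (h ▸ hk)]
  · simp [getElem?_eq_none hk, getElem?_eq_none (h ▸ hk), hf]

theorem not_lex_of_forall_getD_le [LinearOrder α] {d : α} :
    ∀ {as bs : List α}, as.length = bs.length → (∀ k, bs.getD k d ≤ as.getD k d) →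
      ¬ Lex (· < ·) as bs
  | [], [], _, _, h => nomatch h
  | _ :: _, _ :: _, hlen, hle, .cons h =>
    not_lex_of_forall_getD_le (by simpa using hlen) (fun k => hle (k + 1)) h
  | _ :: _, _ :: _, _, hle, .rel h => (hle 0).not_gt h

end List

open Finset

variable {s p : List (Finset ℕ)} {a b c : List ℕ}

theorem IsOcc.length_eq (ha : IsOcc s p a) (hb : IsOcc s p b) : a.length = b.length :=
  ha.1.trans hb.1.symm

theorem IsOcc.zipWith {f : ℕ → ℕ → ℕ} (hf : ∀ x y, f x y = x ∨ f x y = y)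
    (hmono : ∀ x x' y y', x < x' → y < y' → f x y < f x' y')
    (ha : IsOcc s p a) (hb : IsOcc s p b) : IsOcc s p (List.zipWith f a b) := by
  obtain ⟨la, ca, bnda, sa⟩ := ha
  obtain ⟨lb, cb, bndb, sb⟩ := hb
  refine ⟨by simp [la, lb], ca.zipWith hmono cb, ?_, fun k hk => ?_⟩
  · intro x hx
    rw [← List.map_uncurry_zip_eq_zipWith] at hx
    obtain ⟨⟨u, v⟩, huv, rfl⟩ := List.mem_map.1 hx
    obtain ⟨hu, hv⟩ := List.of_mem_zip huv
    rcases hf u v with h | h <;> rw [Function.uncurry_apply_pair, h]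
    exacts [bnda u hu, bndb v hv]
  · rw [List.getD_zipWith_of_length_eq ((hf 0 0).elim id id) (la.trans lb.symm)]
    rcases hf (a.getD k 0) (b.getD k 0) with h | h <;> rw [h]
    exacts [sa k hk, sb k hk]

theorem nonOverlap_comm (h : a.length = b.length) : NonOverlap a b ↔ NonOverlap b a :=
  ⟨fun hab k hk => (hab k (by omega)).symm, fun hba k hk => (hba k (by omega)).symm⟩

theorem NonOverlap.ne (h : NonOverlap a b) (ha : 0 < a.length) : a ≠ b := by
  rintro rfl
  exact h 0 ha rfl

theorem NonOverlap.zipWith_left {f : ℕ → ℕ → ℕ} (hf : ∀ x y, f x y = x ∨ f x y = y)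
    (hlen : a.length = b.length) (ha : NonOverlap a c) (hb : NonOverlap b c) :
    NonOverlap (List.zipWith f a b) c := by
  intro k hk
  have hka : k < a.length := by simpa [hlen] using hk
  rw [List.getD_zipWith_of_length_eq ((hf 0 0).elim id id) hlen]
  rcases hf (a.getD k 0) (b.getD k 0) with h | h <;> rw [h]
  exacts [ha k hka, hb k (hlen ▸ hka)]

theorem NonOverlap.zipWith_min_max (hlen : a.length = b.length) (h : NonOverlap a b) :
    NonOverlap (List.zipWith min a b) (List.zipWith max a b) := by
  intro k hk
  rw [List.getD_zipWith_of_length_eq (min_self 0) hlen,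
    List.getD_zipWith_of_length_eq (max_self 0) hlen]
  exact (min_lt_max.2 (h k (by simpa [hlen] using hk))).ne

theorem IsOcc.getD_le_of_forall_eq_or_lex (ha : IsOcc s p a)
    (hmin : ∀ l, IsOcc s p l → a = l ∨ List.Lex (· < ·) a l) (hb : IsOcc s p b) (k : ℕ) :
    a.getD k 0 ≤ b.getD k 0 := by
  have hlen : a.length = b.length := ha.length_eq hb
  have hmin_occ := ha.zipWith min_choice (fun _ _ _ _ => min_lt_min) hb
  have hget := List.getD_zipWith_of_length_eq (min_self 0) hlen
  -- `zipWith min a b` is an occurrence lying coordinatewise below `a`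
  rcases hmin _ hmin_occ with h | h
  · calc a.getD k 0 = (List.zipWith min a b).getD k 0 := by rw [← h]
      _ ≤ b.getD k 0 := by rw [hget]; exact min_le_right _ _
  · refine absurd h (List.not_lex_of_forall_getD_le (d := 0) (ha.length_eq hmin_occ) fun j => ?_)
    rw [hget]
    exact min_le_left _ _

def IsPacking (s p : List (Finset ℕ)) (F : Finset (List ℕ)) : Prop :=
  (∀ l ∈ F, IsOcc s p l) ∧ (F : Set (List ℕ)).Pairwise NonOverlap

variable {F G : Finset (List ℕ)}

theorem IsPacking.length_eq (hF : IsPacking s p F) (ha : a ∈ F) (hb : b ∈ F) :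
    a.length = b.length :=
  (hF.1 a ha).length_eq (hF.1 b hb)

theorem IsPacking.mono (hF : IsPacking s p F) (h : G ⊆ F) : IsPacking s p G :=
  ⟨fun l hl => hF.1 l (h hl), hF.2.mono (coe_subset.2 h)⟩

theorem IsPacking.insert (hF : IsPacking s p F) (ha : IsOcc s p a)
    (h : ∀ l ∈ F, a ≠ l → NonOverlap a l) : IsPacking s p (insert a F) := by
  refine ⟨forall_mem_insert _ _ _ |>.2 ⟨ha, hF.1⟩, ?_⟩
  rw [coe_insert]
  refine hF.2.insert fun l hl hne => ⟨h l hl hne, ?_⟩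
  exact (nonOverlap_comm (ha.length_eq (hF.1 l hl))).1 (h l hl hne)

theorem IsPacking.card_le (hF : IsPacking s p F) : F.card ≤ s.length + 1 := by
  have hmaps : Set.MapsTo (fun l : List ℕ => l.getD 0 0) F (range (s.length + 1)) := by
    rintro (_ | ⟨x, t⟩) hl
    · simp
    · simpa [Nat.lt_succ_iff] using ((hF.1 _ hl).2.2.1 x (by simp)).le
  -- distinct members of a packing already differ in their first coordinate
  have hinj : Set.InjOn (fun l : List ℕ => l.getD 0 0) F := by
    intro l hl l' hl' heq
    by_contra hne
    have hlen : l.length = l'.length := hF.length_eq hl hl'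
    rcases l with _ | ⟨x, t⟩
    · exact hne (List.length_eq_zero_iff.1 hlen.symm).symm
    · exact hF.2 hl hl' hne 0 (by simp) heq
  simpa using card_le_card_of_injOn _ hmaps hinj

theorem bddAbove_card_isPacking (s p : List (Finset ℕ)) :
    BddAbove {k | ∃ F : Finset (List ℕ), F.card = k ∧ IsPacking s p F} :=
  ⟨s.length + 1, by rintro _ ⟨F, rfl, hF⟩; exact hF.card_le⟩

theorem IsPacking.card_le_supp (hF : IsPacking s p F) : F.card ≤ supp s p :=
  le_csSup (bddAbove_card_isPacking s p) ⟨F, rfl, hF⟩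

theorem exists_isPacking_card_eq_supp (s p : List (Finset ℕ)) :
    ∃ F, IsPacking s p F ∧ F.card = supp s p := by
  have hempty : 0 ∈ {k | ∃ F : Finset (List ℕ), F.card = k ∧ IsPacking s p F} :=
    ⟨∅, rfl, by simp [IsPacking]⟩
  obtain ⟨F, hcard, hF⟩ := Nat.sSup_mem ⟨0, hempty⟩ (bddAbove_card_isPacking s p)
  exact ⟨F, hF, hcard⟩

def uncross (F : Finset (List ℕ)) (a b : List ℕ) : Finset (List ℕ) :=
  insert (List.zipWith min a b) (insert (List.zipWith max a b) ((F.erase a).erase b))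

theorem IsPacking.length_pos (hF : IsPacking s p F) (ha : a ∈ F) (hb : b ∈ F) (hab : a ≠ b) :
    0 < a.length := by
  by_contra h0
  have hlen : a.length = b.length := hF.length_eq ha hb
  exact hab ((List.length_eq_zero_iff.1 (by omega)).trans
    (List.length_eq_zero_iff.1 (by omega)).symm)

theorem IsPacking.nonOverlap_zipWith (hF : IsPacking s p F) (ha : a ∈ F) (hb : b ∈ F)
    {f : ℕ → ℕ → ℕ} (hf : ∀ x y, f x y = x ∨ f x y = y)
    (hc : c ∈ (F.erase a).erase b) : NonOverlap (List.zipWith f a b) c := by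
  obtain ⟨hcb, hca, hcF⟩ : c ≠ b ∧ c ≠ a ∧ c ∈ F := by simpa only [mem_erase] using hc
  exact .zipWith_left hf (hF.length_eq ha hb)
    (hF.2 ha hcF hca.symm) (hF.2 hb hcF hcb.symm)

theorem isPacking_uncross (hF : IsPacking s p F) (ha : a ∈ F) (hb : b ∈ F) (hab : a ≠ b) :
    IsPacking s p (uncross F a b) := by
  have hRF : (F.erase a).erase b ⊆ F := (erase_subset _ _).trans (erase_subset _ _)
  have hmax := (hF.mono hRF).insert
    ((hF.1 a ha).zipWith max_choice (fun _ _ _ _ => max_lt_max) (hF.1 b hb))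
    fun c hc _ => hF.nonOverlap_zipWith ha hb max_choice hc
  refine hmax.insert ((hF.1 a ha).zipWith min_choice (fun _ _ _ _ => min_lt_min) (hF.1 b hb))
    fun c hc _ => ?_
  rcases mem_insert.1 hc with rfl | hc
  · exact .zipWith_min_max (hF.length_eq ha hb) (hF.2 ha hb hab)
  · exact hF.nonOverlap_zipWith ha hb min_choice hc

theorem card_uncross (hF : IsPacking s p F) (ha : a ∈ F) (hb : b ∈ F) (hab : a ≠ b) :
    (uncross F a b).card = F.card := by
  have hpos (f : ℕ → ℕ → ℕ) : 0 < (List.zipWith f a b).length := by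
    simp only [List.length_zipWith, ← hF.length_eq ha hb, min_self]
    exact hF.length_pos ha hb hab
  have hmaxR : List.zipWith max a b ∉ (F.erase a).erase b := fun h =>
    (hF.nonOverlap_zipWith ha hb max_choice h).ne (hpos max) rfl
  have hminR : List.zipWith min a b ∉ insert (List.zipWith max a b) ((F.erase a).erase b) := by
    rw [mem_insert, not_or]
    refine ⟨NonOverlap.ne ?_ (hpos min), fun h =>
      (hF.nonOverlap_zipWith ha hb min_choice h).ne (hpos min) rfl⟩
    exact .zipWith_min_max (hF.length_eq ha hb) (hF.2 ha hb hab)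
  have h2 : 1 < F.card := one_lt_card.2 ⟨a, ha, b, hb, hab⟩
  rw [uncross, card_insert_of_notMem hminR, card_insert_of_notMem hmaxR,
    card_erase_of_mem (mem_erase.2 ⟨hab.symm, hb⟩), card_erase_of_mem ha]
  omega

open Classical in
noncomputable def overlapping (c : List ℕ) (F : Finset (List ℕ)) : Finset (List ℕ) :=
  {l ∈ F | ¬ NonOverlap c l}

theorem mem_overlapping : a ∈ overlapping c F ↔ a ∈ F ∧ ¬ NonOverlap c a := by
  simp [overlapping]

theorem card_overlapping_uncross_lt (hF : IsPacking s p F) (hc : IsOcc s p c)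
    (hcmin : ∀ l, IsOcc s p l → ∀ k, c.getD k 0 ≤ l.getD k 0)
    (ha : a ∈ overlapping c F) (hb : b ∈ overlapping c F) (hab : a ≠ b) :
    (overlapping c (uncross F a b)).card < (overlapping c F).card := by
  have haF := (mem_overlapping.1 ha).1
  have hbF := (mem_overlapping.1 hb).1
  have hlen : a.length = b.length := hF.length_eq haF hbF
  have hmax : NonOverlap c (List.zipWith max a b) := by
    intro k hk
    rw [List.getD_zipWith_of_length_eq (max_self 0) hlen]
    have hne := hF.2 haF hbF hab k (by rw [(hF.1 a haF).1, ← hc.1]; exact hk)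
    exact ((le_min (hcmin a (hF.1 a haF) k) (hcmin b (hF.1 b hbF) k)).trans_lt
      (min_lt_max.2 hne)).ne
  have hsub : overlapping c (uncross F a b) ⊆
      insert (List.zipWith min a b) (((overlapping c F).erase a).erase b) := by
    intro l hl
    obtain ⟨hl, hlc⟩ := mem_overlapping.1 hl
    simp only [uncross, mem_insert, mem_erase] at hl ⊢
    rcases hl with rfl | rfl | ⟨hlb, hla, hlF⟩
    · exact .inl rfl
    · exact absurd hmax hlc
    · exact .inr ⟨hlb, hla, mem_overlapping.2 ⟨hlF, hlc⟩⟩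
  have h2 : 1 < (overlapping c F).card := one_lt_card.2 ⟨a, ha, b, hb, hab⟩
  calc (overlapping c (uncross F a b)).card
      ≤ (((overlapping c F).erase a).erase b).card + 1 :=
        (card_le_card hsub).trans (card_insert_le _ _)
    _ < (overlapping c F).card := by
      rw [card_erase_of_mem (mem_erase.2 ⟨hab.symm, hb⟩), card_erase_of_mem ha]
      omega

theorem exists_isPacking_card_eq_overlapping_le_one (hF : IsPacking s p F) (hc : IsOcc s p c)
    (hcmin : ∀ l, IsOcc s p l → ∀ k, c.getD k 0 ≤ l.getD k 0) :
    ∃ G, IsPacking s p G ∧ G.card = F.card ∧ (overlapping c G).card ≤ 1 := by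
  induction hn : (overlapping c F).card using Nat.strong_induction_on generalizing F with
  | _ n ih =>
    by_cases h1 : n ≤ 1
    · exact ⟨F, hF, rfl, hn ▸ h1⟩
    obtain ⟨a, ha, b, hb, hab⟩ := one_lt_card.1 (hn ▸ not_le.1 h1)
    have haF := (mem_overlapping.1 ha).1
    have hbF := (mem_overlapping.1 hb).1
    obtain ⟨G, hG, hcard, hle⟩ :=
      ih _ (hn ▸ card_overlapping_uncross_lt hF hc hcmin ha hb hab)
        (isPacking_uncross hF haF hbF hab) rfl
    exact ⟨G, hG, hcard.trans (card_uncross hF haF hbF hab), hle⟩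

theorem exists_isPacking_mem_card_le (hF : IsPacking s p F) (hc : IsOcc s p c)
    (h : (overlapping c F).card ≤ 1) :
    ∃ G, c ∈ G ∧ IsPacking s p G ∧ F.card ≤ G.card := by
  by_cases hcF : c ∈ F
  · exact ⟨F, hcF, hF, le_rfl⟩
  have hsub : overlapping c F ⊆ F := fun l hl => (mem_overlapping.1 hl).1
  refine ⟨insert c (F \ overlapping c F), mem_insert_self _ _,
    (hF.mono sdiff_subset).insert hc fun l hl _ => ?_, ?_⟩
  · obtain ⟨hlF, hl⟩ := mem_sdiff.1 hl
    by_contra hcl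
    exact hl (mem_overlapping.2 ⟨hlF, hcl⟩)
  · rw [card_insert_of_notMem fun h => hcF (mem_sdiff.1 h).1, card_sdiff_of_subset hsub]
    have := card_le_card hsub
    omega

theorem stmt9 (s p : List (Finset ℕ)) (lstar : List ℕ) (h1 : IsOcc s p lstar)
    (hmin : ∀ l, IsOcc s p l → lstar = l ∨ List.Lex (· < ·) lstar l) :
    ∃ F : Finset (List ℕ), lstar ∈ F ∧ (∀ l ∈ F, IsOcc s p l) ∧
      (F : Set (List ℕ)).Pairwise NonOverlap ∧ F.card = supp s p := by
  obtain ⟨F, hF, hFcard⟩ := exists_isPacking_card_eq_supp s p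
  obtain ⟨G, hG, hGcard, hGover⟩ := exists_isPacking_card_eq_overlapping_le_one hF h1
    fun l hl => h1.getD_le_of_forall_eq_or_lex hmin hl
  obtain ⟨H, hmem, hH, hle⟩ := exists_isPacking_mem_card_le hG h1 hGover
  exact ⟨H, hmem, hH.1, hH.2, le_antisymm hH.card_le_supp (by omega)⟩
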